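/- For a nested array feasibility region in the case (N+1)² > 4M: if N_in^l := ⌊((N−1) − √((N+1)²−4M))/2⌋ < 1, then the upper threshold N_in^u := ⌈((N−1) + √((N+1)²−4M))/2⌉ equals N − 1, so no integer N_in in {1, ..., N−2} is feasible. -/

import Mathlib

/-! The two thresholds are the roots `r₋ ≤ r₊` of `x² − (N−1)x + (M−N)`, so `r₊ = (N−1) − r₋`.
Since their product `M − N` is nonnegative, `r₋ ≥ 0`; together with `⌊r₋⌋ < 1` this gives
`⌊r₋⌋ = 0`, hence `⌈r₊⌉ = (N−1) − ⌊r₋⌋ = N − 1`. -/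

theorem Int.ceil_intCast_sub_of_floor_eq_zero {R : Type*} [Ring R] [LinearOrder R]
    [IsStrictOrderedRing R] [FloorRing R] (n : ℤ) {x : R} (hx : ⌊x⌋ = 0) :
    ⌈(n : R) - x⌉ = n := by
  rw [sub_eq_add_neg, Int.ceil_intCast_add, Int.ceil_neg, hx, neg_zero, add_zero]

theorem Real.sqrt_add_one_sq_sub_four_mul_le {N M : ℝ} (hN : 1 ≤ N) (hNM : N ≤ M) :
    √((N + 1) ^ 2 - 4 * M) ≤ N - 1 :=
  Real.sqrt_le_iff.mpr ⟨by linarith, by nlinarith⟩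

theorem na_infeasible_case_general (M N : ℤ) (hN : 3 ≤ N) (hMN : N ≤ M)
    (hl : ⌊(((N : ℝ) - 1) - Real.sqrt (((N : ℝ) + 1) ^ 2 - 4 * M)) / 2⌋ < 1) :
    ⌈(((N : ℝ) - 1) + Real.sqrt (((N : ℝ) + 1) ^ 2 - 4 * M)) / 2⌉ = N - 1 := by
  set s := Real.sqrt (((N : ℝ) + 1) ^ 2 - 4 * M)
  have hs : s ≤ (N : ℝ) - 1 :=
    Real.sqrt_add_one_sq_sub_four_mul_le (by exact_mod_cast (by omega : (1 : ℤ) ≤ N))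
      (by exact_mod_cast hMN)
  have hfloor : ⌊((N : ℝ) - 1 - s) / 2⌋ = 0 :=
    le_antisymm (Int.lt_add_one_iff.mp hl) (Int.floor_nonneg.mpr (by linarith))
  have hroots : ((N : ℝ) - 1 + s) / 2 = ((N - 1 : ℤ) : ℝ) - ((N : ℝ) - 1 - s) / 2 := by
    push_cast; ring
  rw [hroots, Int.ceil_intCast_sub_of_floor_eq_zero _ hfloor]

/-- If (N+1)² > 4M and the lower threshold
⌊((N-1) - √((N+1)²-4M))/2⌋ < 1, then the upper threshold
⌈((N-1) + √((N+1)²-4M))/2⌉ equals N - 1, so no N_in ∈ {1,...,N-2} is feasible. -/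
theorem na_infeasible_case (M N : ℤ) (hN : 3 ≤ N) (hMN : N ≤ M)
    (h : 4 * M < (N + 1) ^ 2)
    (hl : ⌊(((N : ℝ) - 1) - Real.sqrt (((N : ℝ) + 1) ^ 2 - 4 * M)) / 2⌋ < 1) :
    ⌈(((N : ℝ) - 1) + Real.sqrt (((N : ℝ) + 1) ^ 2 - 4 * M)) / 2⌉ = N - 1 :=
  na_infeasible_case_general M N hN hMN hl
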